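/- Let u : ℝ → ℂ be in H¹(ℝ) and define the gauge transform φ(x) = exp((i/2)∫_{-∞}^x |u(y)|² dy) u(x). Then |φ(x)| = |u(x)| for all x, φ ∈ H¹(ℝ), and the map u ↦ φ is Lipschitz continuous on bounded subsets of H¹(ℝ): for u₁, u₂ in a ball of H¹ of radius M, ‖φ₁ − φ₂‖_{H¹} ≤ C(M) ‖u₁ − u₂‖_{H¹}. -/

import Mathlib

open MeasureTheory

/-- The gaugeDNLS transformation `φ(x) = exp((i/2)∫_{-∞}^x |u|² dy) u(x)` used for DNLS. -/
noncomputable def gaugeDNLS (u : ℝ → ℂ) : ℝ → ℂ := fun x =>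
  Complex.exp (Complex.I / 2 * ((∫ y in Set.Iio x, (‖u y‖) ^ 2 : ℝ) : ℂ)) * u x

/-- Membership in `H¹(ℝ)` (encoded via classical derivatives). -/
def InH1 (u : ℝ → ℂ) : Prop :=
  Differentiable ℝ u ∧ MemLp u 2 volume ∧ MemLp (deriv u) 2 volume

/-- The `H¹(ℝ)` norm. -/
noncomputable def H1Norm (u : ℝ → ℂ) : ℝ :=
  (eLpNorm u 2 volume).toReal + (eLpNorm (deriv u) 2 volume).toReal

/-! The phase `θ x = ∫_{-∞}^x |u|²` is real, so `φ = e^{iθ/2} u` has `|φ| = |u|`, and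
`φ' = e^{iθ/2} (u' + (i/2)|u|²u)`. Everything is controlled by the embedding
`‖u‖_∞ ≤ ‖u‖_{H¹}`, which comes from `|u x|² = ∫_{-∞}^x 2⟨u, u'⟩ ≤ ‖u‖₂² + ‖u'‖₂²`.
For the Lipschitz bound, both `φ` and `φ'` have the form `e f` with `|e| = 1`, and
`e₁ f₁ - e₂ f₂ = e₁ (f₁ - f₂) + (e₁ - e₂) f₂`. Since `θ x` is the squared `L²` norm of `u` on
`(-∞, x)`, the reverse triangle inequality gives
`|e₁ - e₂| ≤ |θ₁ - θ₂| / 2 ≤ (‖u₁‖₂ + ‖u₂‖₂) ‖u₁ - u₂‖₂ / 2`. -/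

open Set Filter Topology Complex
open scoped RealInnerProductSpace

section L2

variable {α E F G : Type*} [MeasureSpace α] [NormedAddCommGroup E] [NormedAddCommGroup F]
  [NormedAddCommGroup G]

noncomputable def l2Norm (f : α → E) : ℝ := (eLpNorm f 2 volume).toReal

lemma l2Norm_nonneg (f : α → E) : 0 ≤ l2Norm f := ENNReal.toReal_nonneg

lemma sq_l2Norm {f : α → E} (hf : MemLp f 2 volume) : l2Norm f ^ 2 = ∫ x, ‖f x‖ ^ 2 := by
  have hint : 0 ≤ ∫ x, ‖f x‖ ^ 2 := integral_nonneg fun x => by positivity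
  rw [l2Norm, hf.eLpNorm_eq_integral_rpow_norm two_ne_zero ENNReal.ofNat_ne_top,
    ENNReal.toReal_ofNat]
  simp_rw [Real.rpow_two]
  rw [ENNReal.toReal_ofReal (by positivity), ← Real.rpow_natCast, ← Real.rpow_mul hint]
  norm_num

lemma l2Norm_le_of_norm_le {f : α → E} {g : α → F} (hg : MemLp g 2 volume)
    (h : ∀ x, ‖f x‖ ≤ ‖g x‖) : l2Norm f ≤ l2Norm g :=
  ENNReal.toReal_mono hg.eLpNorm_ne_top (eLpNorm_mono h)

lemma l2Norm_add_le {f g : α → E} (hf : MemLp f 2 volume) (hg : MemLp g 2 volume) :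
    l2Norm (f + g) ≤ l2Norm f + l2Norm g := by
  have := norm_add_le (hf.toLp f) (hg.toLp g)
  rwa [← MemLp.toLp_add, Lp.norm_toLp, Lp.norm_toLp, Lp.norm_toLp] at this

lemma l2Norm_norm (g : α → E) : l2Norm (fun x => ‖g x‖) = l2Norm g := by
  rw [l2Norm, eLpNorm_norm, l2Norm]

lemma l2Norm_const_mul_norm {a : ℝ} (ha : 0 ≤ a) (g : α → E) :
    l2Norm (fun x => a * ‖g x‖) = a * l2Norm g := by
  rw [l2Norm, show (fun x => a * ‖g x‖) = a • fun x => ‖g x‖ from rfl, eLpNorm_const_smul,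
    eLpNorm_norm, ENNReal.toReal_mul, ← l2Norm]
  simp [abs_of_nonneg ha]

lemma l2Norm_le_of_norm_le_add {f : α → E} {g : α → F} {h : α → G} {b : ℝ}
    (hg : MemLp g 2 volume) (hh : MemLp h 2 volume) (hb : 0 ≤ b)
    (hf : ∀ x, ‖f x‖ ≤ ‖g x‖ + b * ‖h x‖) : l2Norm f ≤ l2Norm g + b * l2Norm h :=
  calc l2Norm f ≤ l2Norm (fun x => ‖g x‖ + b * ‖h x‖) :=
        l2Norm_le_of_norm_le (hg.norm.add (hh.norm.const_mul b))
          fun x => (hf x).trans (le_abs_self _)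
    _ ≤ l2Norm (fun x => ‖g x‖) + l2Norm (fun x => b * ‖h x‖) :=
        l2Norm_add_le hg.norm (hh.norm.const_mul b)
    _ = l2Norm g + b * l2Norm h := by
        rw [l2Norm_const_mul_norm hb, l2Norm_norm]

lemma abs_l2Norm_sub_l2Norm_le {f g : α → E} (hf : MemLp f 2 volume) (hg : MemLp g 2 volume) :
    |l2Norm f - l2Norm g| ≤ l2Norm (f - g) := by
  have := abs_norm_sub_norm_le (hf.toLp f) (hg.toLp g)
  rwa [← MemLp.toLp_sub, Lp.norm_toLp, Lp.norm_toLp, Lp.norm_toLp] at this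

end L2

section Embedding

variable {E : Type*} [NormedAddCommGroup E] [InnerProductSpace ℝ E] {f : ℝ → E}

theorem sq_norm_le_integral_sq_norm_add_deriv (hd : Differentiable ℝ f)
    (hf : MemLp f 2 volume) (hf' : MemLp (deriv f) 2 volume) (x : ℝ) :
    ‖f x‖ ^ 2 ≤ (∫ y, ‖f y‖ ^ 2) + ∫ y, ‖deriv f y‖ ^ 2 := by
  have hsq : Integrable (fun y => ‖f y‖ ^ 2) := (memLp_two_iff_integrable_sq_norm hf.1).1 hf
  have hsq' : Integrable (fun y => ‖deriv f y‖ ^ 2) :=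
    (memLp_two_iff_integrable_sq_norm hf'.1).1 hf'
  set g : ℝ → ℝ := fun y => 2 * ⟪f y, deriv f y⟫ with hg
  have hderiv : ∀ y, HasDerivAt (‖f ·‖ ^ 2) (g y) y := fun y => (hd y).hasDerivAt.norm_sq
  have hbound : ∀ y, |g y| ≤ ‖f y‖ ^ 2 + ‖deriv f y‖ ^ 2 := fun y => by
    rw [hg, abs_mul, abs_two]
    nlinarith [abs_real_inner_le_norm (f y) (deriv f y), two_mul_le_add_sq ‖f y‖ ‖deriv f y‖]
  have hgint : Integrable g :=
    (hsq.add hsq').mono' ((hd.continuous.aestronglyMeasurable.inner hf'.1).const_mul 2)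
      (Eventually.of_forall fun y => by rw [Real.norm_eq_abs]; exact hbound y)
  have hlim : Tendsto (‖f ·‖ ^ 2) atBot (𝓝 0) :=
    tendsto_zero_of_hasDerivAt_of_integrableOn_Iic (a := x) (fun y _ => hderiv y)
      hgint.integrableOn hsq.integrableOn
  calc ‖f x‖ ^ 2 = ∫ y in Iic x, g y := by
        rw [integral_Iic_of_hasDerivAt_of_tendsto' (fun y _ => hderiv y) hgint.integrableOn hlim,
          sub_zero]
    _ ≤ ∫ y in Iic x, (‖f y‖ ^ 2 + ‖deriv f y‖ ^ 2) :=
        setIntegral_mono hgint.integrableOn (hsq.add hsq').integrableOn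
          fun y => (le_abs_self _).trans (hbound y)
    _ ≤ ∫ y, (‖f y‖ ^ 2 + ‖deriv f y‖ ^ 2) :=
        setIntegral_le_integral (hsq.add hsq') (Eventually.of_forall fun y => by positivity)
    _ = _ := integral_add hsq hsq'

theorem norm_le_l2Norm_add_l2Norm_deriv (hd : Differentiable ℝ f) (hf : MemLp f 2 volume)
    (hf' : MemLp (deriv f) 2 volume) (x : ℝ) : ‖f x‖ ≤ l2Norm f + l2Norm (deriv f) := by
  have h := sq_norm_le_integral_sq_norm_add_deriv hd hf hf' x
  rw [← sq_l2Norm hf, ← sq_l2Norm hf'] at h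
  nlinarith [l2Norm_nonneg f, l2Norm_nonneg (deriv f), norm_nonneg (f x)]

end Embedding

theorem hasDerivAt_setIntegral_Iio {E : Type*} [NormedAddCommGroup E] [NormedSpace ℝ E]
    [CompleteSpace E] {f : ℝ → E} (hc : Continuous f) (hi : Integrable f) (x : ℝ) :
    HasDerivAt (fun x => ∫ y in Iio x, f y) (f x) x := by
  have h : ∀ a, ∫ y in Iio a, f y = (∫ y in Iic 0, f y) + ∫ y in (0 : ℝ)..a, f y := fun a => by
    rw [← integral_Iic_eq_integral_Iio, ← intervalIntegral.integral_Iic_sub_Iic hi.integrableOn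
      hi.integrableOn, add_sub_cancel]
  simp_rw [h]
  exact (hc.integral_hasStrictDerivAt 0 x).hasDerivAt.const_add _

lemma norm_cexp_I_div_two_mul (t : ℝ) : ‖cexp (I / 2 * t)‖ = 1 := by
  rw [norm_exp]
  simp

lemma norm_cexp_I_div_two_mul_sub_le (s t : ℝ) :
    ‖cexp (I / 2 * s) - cexp (I / 2 * t)‖ ≤ |s - t| / 2 := by
  have h : cexp (I / 2 * s) - cexp (I / 2 * t)
      = cexp (I / 2 * t) * (cexp (I * ↑((s - t) / 2)) - 1) := by
    rw [mul_sub, ← Complex.exp_add, mul_one]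
    push_cast
    ring_nf
  rw [h, norm_mul, norm_cexp_I_div_two_mul, one_mul]
  calc _ ≤ ‖(s - t) / 2‖ := Real.norm_exp_I_mul_ofReal_sub_one_le
    _ = |s - t| / 2 := by rw [Real.norm_eq_abs, abs_div, abs_two]

lemma norm_mul_sub_mul_le {R : Type*} [SeminormedRing R] {a b z w : R} (ha : ‖a‖ ≤ 1) :
    ‖a * z - b * w‖ ≤ ‖z - w‖ + ‖a - b‖ * ‖w‖ :=
  calc ‖a * z - b * w‖ = ‖a * (z - w) + (a - b) * w‖ := by congr 1; noncomm_ring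
    _ ≤ ‖a‖ * ‖z - w‖ + ‖a - b‖ * ‖w‖ :=
        (norm_add_le _ _).trans (add_le_add (norm_mul_le _ _) (norm_mul_le _ _))
    _ ≤ ‖z - w‖ + ‖a - b‖ * ‖w‖ := by
        gcongr
        exact mul_le_of_le_one_left (norm_nonneg _) ha

lemma l2Norm_mul_sub_mul_le {α R : Type*} [MeasureSpace α] [NormedRing R]
    {e₁ e₂ f₁ f₂ : α → R} {ε : ℝ} (hf : MemLp (f₁ - f₂) 2 volume) (hf₂ : MemLp f₂ 2 volume)
    (he₁ : ∀ x, ‖e₁ x‖ ≤ 1) (he : ∀ x, ‖e₁ x - e₂ x‖ ≤ ε) (hε : 0 ≤ ε) :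
    l2Norm (fun x => e₁ x * f₁ x - e₂ x * f₂ x) ≤ l2Norm (f₁ - f₂) + ε * l2Norm f₂ :=
  l2Norm_le_of_norm_le_add hf hf₂ hε fun x =>
    calc ‖e₁ x * f₁ x - e₂ x * f₂ x‖ ≤ ‖f₁ x - f₂ x‖ + ‖e₁ x - e₂ x‖ * ‖f₂ x‖ :=
          norm_mul_sub_mul_le (he₁ x)
      _ ≤ ‖(f₁ - f₂) x‖ + ε * ‖f₂ x‖ :=
          add_le_add le_rfl (mul_le_mul_of_nonneg_right (he x) (norm_nonneg _))

lemma norm_sq_mul_sub_le {z w : ℂ} {K : ℝ} (hz : ‖z‖ ≤ K) (hw : ‖w‖ ≤ K) :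
    ‖(‖z‖ ^ 2 : ℝ) * z - (‖w‖ ^ 2 : ℝ) * w‖ ≤ 3 * K ^ 2 * ‖z - w‖ := by
  have hzw : |‖z‖ - ‖w‖| ≤ ‖z - w‖ := abs_norm_sub_norm_le z w
  have hsq : |‖z‖ ^ 2 - ‖w‖ ^ 2| ≤ 2 * K * ‖z - w‖ := by
    rw [sq_sub_sq, abs_mul, abs_of_nonneg (by positivity : 0 ≤ ‖z‖ + ‖w‖)]
    nlinarith [abs_nonneg (‖z‖ - ‖w‖), norm_nonneg z, norm_nonneg w]
  calc ‖(‖z‖ ^ 2 : ℝ) * z - (‖w‖ ^ 2 : ℝ) * w‖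
      = ‖(‖z‖ ^ 2 : ℝ) * (z - w) + ((‖z‖ ^ 2 - ‖w‖ ^ 2 : ℝ) : ℂ) * w‖ := by
        congr 1; push_cast; ring
    _ ≤ ‖z‖ ^ 2 * ‖z - w‖ + |‖z‖ ^ 2 - ‖w‖ ^ 2| * ‖w‖ := by
        refine (norm_add_le _ _).trans_eq ?_
        simp only [norm_mul, norm_real, norm_pow, Real.norm_eq_abs, abs_norm]
    _ ≤ K ^ 2 * ‖z - w‖ + 2 * K * ‖z - w‖ * K := by
        have hK : 0 ≤ K := (norm_nonneg z).trans hz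
        gcongr
    _ = 3 * K ^ 2 * ‖z - w‖ := by ring

noncomputable def gaugePhase (u : ℝ → ℂ) (x : ℝ) : ℝ := ∫ y in Iio x, ‖u y‖ ^ 2

lemma gaugeDNLS_apply (u : ℝ → ℂ) (x : ℝ) :
    gaugeDNLS u x = cexp (I / 2 * gaugePhase u x) * u x := rfl

lemma norm_gaugeDNLS (u : ℝ → ℂ) (x : ℝ) : ‖gaugeDNLS u x‖ = ‖u x‖ := by
  rw [gaugeDNLS_apply, norm_mul, norm_cexp_I_div_two_mul, one_mul]

lemma hasDerivAt_gaugePhase {u : ℝ → ℂ} (hc : Continuous u) (hu : MemLp u 2 volume) (x : ℝ) :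
    HasDerivAt (gaugePhase u) (‖u x‖ ^ 2) x :=
  hasDerivAt_setIntegral_Iio (hc.norm.pow 2) ((memLp_two_iff_integrable_sq_norm hu.1).1 hu) x

lemma gaugePhase_eq_sq_l2Norm_indicator {u : ℝ → ℂ} (hu : MemLp u 2 volume) (x : ℝ) :
    gaugePhase u x = l2Norm ((Iio x).indicator u) ^ 2 := by
  have hm : MemLp ((Iio x).indicator u) 2 volume := hu.indicator measurableSet_Iio
  rw [sq_l2Norm hm, gaugePhase, ← integral_indicator measurableSet_Iio]
  refine integral_congr_ae (ae_of_all _ fun y => ?_)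
  by_cases hy : y ∈ Iio x <;> simp [hy]

lemma abs_gaugePhase_sub_le {u₁ u₂ : ℝ → ℂ} (h₁ : MemLp u₁ 2 volume) (h₂ : MemLp u₂ 2 volume)
    (x : ℝ) :
    |gaugePhase u₁ x - gaugePhase u₂ x| ≤ (l2Norm u₁ + l2Norm u₂) * l2Norm (u₁ - u₂) := by
  have hle : ∀ {f : ℝ → ℂ}, MemLp f 2 volume → l2Norm ((Iio x).indicator f) ≤ l2Norm f :=
    fun hf => l2Norm_le_of_norm_le hf fun y => norm_indicator_le_norm_self _ _
  have hdiff : |l2Norm ((Iio x).indicator u₁) - l2Norm ((Iio x).indicator u₂)|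
      ≤ l2Norm (u₁ - u₂) := by
    have hm₁ : MemLp ((Iio x).indicator u₁) 2 volume := h₁.indicator measurableSet_Iio
    have hm₂ : MemLp ((Iio x).indicator u₂) 2 volume := h₂.indicator measurableSet_Iio
    refine (abs_l2Norm_sub_l2Norm_le hm₁ hm₂).trans ?_
    rw [← indicator_sub']
    exact hle (h₁.sub h₂)
  rw [gaugePhase_eq_sq_l2Norm_indicator h₁, gaugePhase_eq_sq_l2Norm_indicator h₂, sq_sub_sq,
    abs_mul, abs_of_nonneg (add_nonneg (l2Norm_nonneg _) (l2Norm_nonneg _))]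
  exact mul_le_mul (add_le_add (hle h₁) (hle h₂)) hdiff (abs_nonneg _)
    (add_nonneg (l2Norm_nonneg _) (l2Norm_nonneg _))

lemma H1Norm_eq (u : ℝ → ℂ) : H1Norm u = l2Norm u + l2Norm (deriv u) := rfl

lemma norm_le_H1Norm {u : ℝ → ℂ} (hu : InH1 u) (x : ℝ) : ‖u x‖ ≤ H1Norm u :=
  norm_le_l2Norm_add_l2Norm_deriv hu.1 hu.2.1 hu.2.2 x

lemma deriv_sub_of_differentiable {u₁ u₂ : ℝ → ℂ} (h₁ : Differentiable ℝ u₁)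
    (h₂ : Differentiable ℝ u₂) : deriv (u₁ - u₂) = deriv u₁ - deriv u₂ :=
  funext fun x => deriv_sub (h₁ x) (h₂ x)

lemma InH1.sub {u₁ u₂ : ℝ → ℂ} (h₁ : InH1 u₁) (h₂ : InH1 u₂) : InH1 (u₁ - u₂) := by
  refine ⟨h₁.1.sub h₂.1, h₁.2.1.sub h₂.2.1, ?_⟩
  rw [deriv_sub_of_differentiable h₁.1 h₂.1]
  exact h₁.2.2.sub h₂.2.2

noncomputable def gaugeCovDeriv (u : ℝ → ℂ) (x : ℝ) : ℂ :=
  deriv u x + I / 2 * (‖u x‖ ^ 2 : ℝ) * u x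

lemma hasDerivAt_gaugeDNLS {u : ℝ → ℂ} (hu : InH1 u) (x : ℝ) :
    HasDerivAt (gaugeDNLS u) (cexp (I / 2 * gaugePhase u x) * gaugeCovDeriv u x) x := by
  have hphase :=
    (((hasDerivAt_gaugePhase hu.1.continuous hu.2.1 x).ofReal_comp).const_mul (I / 2)).cexp
  refine (hphase.mul (hu.1 x).hasDerivAt).congr_deriv ?_
  rw [gaugeCovDeriv]
  ring

lemma norm_gaugeCovDeriv_le {u : ℝ → ℂ} {K : ℝ} (hK : ∀ x, ‖u x‖ ≤ K) (x : ℝ) :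
    ‖gaugeCovDeriv u x‖ ≤ ‖deriv u x‖ + K ^ 2 / 2 * ‖u x‖ := by
  refine (norm_add_le _ _).trans ?_
  have hI : ‖I / 2‖ = 1 / 2 := by simp
  rw [norm_mul, norm_mul, hI, norm_real, Real.norm_eq_abs, abs_of_nonneg (by positivity)]
  have hsq : ‖u x‖ ^ 2 ≤ K ^ 2 := pow_le_pow_left₀ (norm_nonneg _) (hK x) 2
  gcongr _ + ?_ * _
  linarith

lemma norm_gaugeCovDeriv_sub_le {u₁ u₂ : ℝ → ℂ} {K : ℝ} (h₁ : Differentiable ℝ u₁)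
    (h₂ : Differentiable ℝ u₂) (hK₁ : ∀ x, ‖u₁ x‖ ≤ K) (hK₂ : ∀ x, ‖u₂ x‖ ≤ K) (x : ℝ) :
    ‖gaugeCovDeriv u₁ x - gaugeCovDeriv u₂ x‖
      ≤ ‖deriv (u₁ - u₂) x‖ + 3 * K ^ 2 / 2 * ‖(u₁ - u₂) x‖ := by
  have h : gaugeCovDeriv u₁ x - gaugeCovDeriv u₂ x = deriv (u₁ - u₂) x
      + I / 2 * ((‖u₁ x‖ ^ 2 : ℝ) * u₁ x - (‖u₂ x‖ ^ 2 : ℝ) * u₂ x) := by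
    rw [deriv_sub_of_differentiable h₁ h₂, gaugeCovDeriv, gaugeCovDeriv, Pi.sub_apply]
    ring
  have hI : ‖I / 2‖ = 1 / 2 := by simp
  rw [h]
  refine (norm_add_le _ _).trans ?_
  rw [norm_mul, hI, Pi.sub_apply]
  linarith [norm_sq_mul_sub_le (hK₁ x) (hK₂ x)]

lemma memLp_gaugeCovDeriv {u : ℝ → ℂ} (hu : InH1 u) : MemLp (gaugeCovDeriv u) 2 volume := by
  have hmeas : AEStronglyMeasurable (gaugeCovDeriv u) volume := by
    have hc := hu.1.continuous
    exact hu.2.2.1.add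
      (by fun_prop : Continuous fun x => I / 2 * (‖u x‖ ^ 2 : ℝ) * u x).aestronglyMeasurable
  refine (hu.2.2.norm.add (hu.2.1.norm.const_mul (H1Norm u ^ 2 / 2))).of_le hmeas
    (ae_of_all _ fun x => ?_)
  exact (norm_gaugeCovDeriv_le (norm_le_H1Norm hu) x).trans (le_abs_self _)

theorem inH1_gaugeDNLS {u : ℝ → ℂ} (hu : InH1 u) : InH1 (gaugeDNLS u) := by
  have hd : Differentiable ℝ (gaugeDNLS u) := fun x =>
    (hasDerivAt_gaugeDNLS hu x).differentiableAt
  have hphase : Continuous (gaugePhase u) := continuous_iff_continuousAt.2 fun x =>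
    (hasDerivAt_gaugePhase hu.1.continuous hu.2.1 x).continuousAt
  refine ⟨hd, hu.2.1.of_le hd.continuous.aestronglyMeasurable
    (ae_of_all _ fun x => (norm_gaugeDNLS u x).le), ?_⟩
  rw [funext fun x => (hasDerivAt_gaugeDNLS hu x).deriv]
  refine (memLp_gaugeCovDeriv hu).of_le
    ((by fun_prop : Continuous fun x => cexp (I / 2 * gaugePhase u x)).aestronglyMeasurable.mul
      (memLp_gaugeCovDeriv hu).1) (ae_of_all _ fun x => ?_)
  rw [norm_mul, norm_cexp_I_div_two_mul, one_mul]

theorem H1Norm_gaugeDNLS_sub_le {u₁ u₂ : ℝ → ℂ} {M : ℝ} (h₁ : InH1 u₁) (h₂ : InH1 u₂)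
    (hM₁ : H1Norm u₁ ≤ M) (hM₂ : H1Norm u₂ ≤ M) :
    H1Norm (gaugeDNLS u₁ - gaugeDNLS u₂) ≤ 2 * (1 + M ^ 2) ^ 2 * H1Norm (u₁ - u₂) := by
  have hd := h₁.sub h₂
  set δ := H1Norm (u₁ - u₂)
  have hδ₀ : l2Norm (u₁ - u₂) ≤ δ := by
    linarith [l2Norm_nonneg (deriv (u₁ - u₂)), H1Norm_eq (u₁ - u₂)]
  have hδ₁ : l2Norm (deriv (u₁ - u₂)) ≤ δ := by
    linarith [l2Norm_nonneg (u₁ - u₂), H1Norm_eq (u₁ - u₂)]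
  have hM₁₀ : l2Norm u₁ ≤ M := by linarith [l2Norm_nonneg (deriv u₁), H1Norm_eq u₁]
  have hM₂₀ : l2Norm u₂ ≤ M := by linarith [l2Norm_nonneg (deriv u₂), H1Norm_eq u₂]
  have hM₂₁ : l2Norm (deriv u₂) ≤ M := by linarith [l2Norm_nonneg u₂, H1Norm_eq u₂]
  have hK₁ : ∀ x, ‖u₁ x‖ ≤ M := fun x => (norm_le_H1Norm h₁ x).trans hM₁
  have hK₂ : ∀ x, ‖u₂ x‖ ≤ M := fun x => (norm_le_H1Norm h₂ x).trans hM₂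
  have hM : 0 ≤ M := (norm_nonneg _).trans (hK₁ 0)
  have hδ : 0 ≤ δ := (l2Norm_nonneg _).trans hδ₀
  have he : ∀ x, ‖cexp (I / 2 * gaugePhase u₁ x) - cexp (I / 2 * gaugePhase u₂ x)‖ ≤ M * δ :=
    fun x => calc
      _ ≤ |gaugePhase u₁ x - gaugePhase u₂ x| / 2 := norm_cexp_I_div_two_mul_sub_le _ _
      _ ≤ (l2Norm u₁ + l2Norm u₂) * l2Norm (u₁ - u₂) / 2 := by
          gcongr; exact abs_gaugePhase_sub_le h₁.2.1 h₂.2.1 x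
      _ ≤ (M + M) * δ / 2 := by
          gcongr ?_ / 2
          exact mul_le_mul (by linarith) hδ₀ (l2Norm_nonneg _) (by linarith)
      _ = M * δ := by ring
  have hunit : ∀ x, ‖cexp (I / 2 * gaugePhase u₁ x)‖ ≤ 1 := fun x =>
    (norm_cexp_I_div_two_mul _).le
  have hL2 : l2Norm (gaugeDNLS u₁ - gaugeDNLS u₂) ≤ l2Norm (u₁ - u₂) + M * δ * l2Norm u₂ :=
    l2Norm_mul_sub_mul_le hd.2.1 h₂.2.1 hunit he (by positivity)
  have hv₂ : l2Norm (gaugeCovDeriv u₂) ≤ l2Norm (deriv u₂) + M ^ 2 / 2 * l2Norm u₂ :=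
    l2Norm_le_of_norm_le_add h₂.2.2 h₂.2.1 (by positivity) (norm_gaugeCovDeriv_le hK₂)
  have hv : l2Norm (gaugeCovDeriv u₁ - gaugeCovDeriv u₂)
      ≤ l2Norm (deriv (u₁ - u₂)) + 3 * M ^ 2 / 2 * l2Norm (u₁ - u₂) :=
    l2Norm_le_of_norm_le_add hd.2.2 hd.2.1 (by positivity)
      (norm_gaugeCovDeriv_sub_le h₁.1 h₂.1 hK₁ hK₂)
  have hD : l2Norm (deriv (gaugeDNLS u₁ - gaugeDNLS u₂))
      ≤ l2Norm (gaugeCovDeriv u₁ - gaugeCovDeriv u₂) + M * δ * l2Norm (gaugeCovDeriv u₂) := by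
    rw [funext fun x => ((hasDerivAt_gaugeDNLS h₁ x).sub (hasDerivAt_gaugeDNLS h₂ x)).deriv]
    exact l2Norm_mul_sub_mul_le ((memLp_gaugeCovDeriv h₁).sub (memLp_gaugeCovDeriv h₂))
      (memLp_gaugeCovDeriv h₂) hunit he (by positivity)
  have hMδ : 0 ≤ M * δ := by positivity
  have hu₂δ : M * δ * l2Norm u₂ ≤ M * δ * M := mul_le_mul_of_nonneg_left hM₂₀ hMδ
  have hv₂δ : M * δ * l2Norm (gaugeCovDeriv u₂) ≤ M * δ * (M + M ^ 2 / 2 * M) :=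
    mul_le_mul_of_nonneg_left (hv₂.trans (by gcongr)) hMδ
  have hdδ : 3 * M ^ 2 / 2 * l2Norm (u₁ - u₂) ≤ 3 * M ^ 2 / 2 * δ := by gcongr
  rw [H1Norm_eq]
  nlinarith [mul_nonneg (pow_nonneg hM 4) hδ, mul_nonneg (pow_nonneg hM 2) hδ]

theorem stmt_12 :
    (∀ u : ℝ → ℂ, ∀ x, ‖gaugeDNLS u x‖ = ‖u x‖) ∧
    (∀ u : ℝ → ℂ, InH1 u → InH1 (gaugeDNLS u)) ∧
    (∀ M > (0 : ℝ), ∃ C > (0 : ℝ), ∀ u₁ u₂ : ℝ → ℂ, InH1 u₁ → InH1 u₂ →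
      H1Norm u₁ ≤ M → H1Norm u₂ ≤ M →
      H1Norm (gaugeDNLS u₁ - gaugeDNLS u₂) ≤ C * H1Norm (u₁ - u₂)) :=
  ⟨norm_gaugeDNLS, fun _ hu => inH1_gaugeDNLS hu, fun M _ =>
    ⟨2 * (1 + M ^ 2) ^ 2, by positivity, fun _ _ h₁ h₂ hM₁ hM₂ =>
      H1Norm_gaugeDNLS_sub_le h₁ h₂ hM₁ hM₂⟩⟩
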